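/- arXiv:2401.08364 — 3 statements merged into one kernel-verified Lean document; each statement's English description precedes it below -/
import Mathlib

section
/- Let $\{\xi_i\}_{i=1}^n$ be independent real-valued random variables with common mean $\mu$, satisfying $|\xi_i| \le B$ and $E[(\xi_i - \mu)^2] \le \tau^2$ for each $i$. Let $\{b_i\}_{i=1}^n$ be deterministic reals with $b_{\max} := \max_i |b_i|$. Then for any $a > 0$ and $\epsilon > 0$, $P\left[\sum_{i=1}^n b_i(\xi_i - \mu) \ge a\tau^2 + \epsilon\right] \le \exp\left\{ -\frac{6 a \epsilon}{3\sum_{i=1}^n b_i^2 + 4 a B b_{\max}} \right\}$, and the same bound holds for $P[\sum_i b_i(\mu - \xi_i) \ge a\tau^2 + \epsilon]$. -/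
open MeasureTheory ProbabilityTheory

private lemma fact_ge : ∀ m : ℕ, 2 * 3 ^ m ≤ (m + 2).factorial := by
  intro m
  induction m with
  | zero => simp [Nat.factorial]
  | succ k ih =>
    calc 2 * 3 ^ (k + 1) = 3 * (2 * 3 ^ k) := by ring
    _ ≤ (k + 3) * (k + 2).factorial := by
        apply Nat.mul_le_mul _ ih
        omega
    _ = (k + 3).factorial := rfl

private lemma exp_quad_bound {x c : ℝ} (hx : |x| ≤ c) (hc : c < 3) :
    Real.exp x ≤ 1 + x + x ^ 2 * (3 / (2 * (3 - c))) := by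
  have hc0 : 0 ≤ c := (abs_nonneg x).trans hx
  have hsum : Summable (fun n : ℕ => x ^ n / n.factorial) := Real.summable_pow_div_factorial x
  have hexp : Real.exp x = ∑' n : ℕ, x ^ n / n.factorial := by
    rw [Real.exp_eq_exp_ℝ, NormedSpace.exp_eq_tsum_div]
  have hsplit := Summable.sum_add_tsum_nat_add (f := fun n : ℕ => x ^ n / n.factorial) 2 hsum
  have hrange : ∑ i ∈ Finset.range 2, x ^ i / (Nat.factorial i : ℝ) = 1 + x := by
    simp [Finset.sum_range_succ, Nat.factorial]
  have htail_summable : Summable (fun n : ℕ => x ^ (n + 2) / (Nat.factorial (n + 2) : ℝ)) :=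
    (summable_nat_add_iff 2).mpr hsum
  have hgeo : Summable (fun n : ℕ => x ^ 2 / 2 * (c / 3) ^ n) :=
    (summable_geometric_of_lt_one (by positivity) (by linarith)).mul_left _
  have hterm : ∀ n : ℕ, x ^ (n + 2) / (Nat.factorial (n + 2) : ℝ) ≤ x ^ 2 / 2 * (c / 3) ^ n := by
    intro n
    have h1 : x ^ (n + 2) / (Nat.factorial (n + 2) : ℝ) ≤ |x| ^ (n + 2) / (Nat.factorial (n + 2) : ℝ) := by
      apply div_le_div_of_nonneg_right _ (by positivity)
      calc x ^ (n + 2) ≤ |x ^ (n + 2)| := le_abs_self _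
      _ = |x| ^ (n + 2) := abs_pow x _
    refine h1.trans ?_
    have h2 : |x| ^ (n + 2) ≤ x ^ 2 * c ^ n := by
      have : |x| ^ (n + 2) = |x| ^ 2 * |x| ^ n := by ring
      rw [this, sq_abs]
      exact mul_le_mul_of_nonneg_left (pow_le_pow_left₀ (abs_nonneg x) hx n) (sq_nonneg x)
    have h3 : (2 * 3 ^ n : ℝ) ≤ (Nat.factorial (n + 2) : ℝ) := by
      exact_mod_cast fact_ge n
    have h4 : x ^ (0:ℕ) = 1 := pow_zero x
    calc |x| ^ (n + 2) / (Nat.factorial (n + 2) : ℝ)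
        ≤ (x ^ 2 * c ^ n) / (2 * 3 ^ n) :=
          div_le_div₀ (by positivity) h2 (by positivity) h3
      _ = x ^ 2 / 2 * (c / 3) ^ n := by rw [div_pow]; ring
  have htail : (∑' n : ℕ, x ^ (n + 2) / (Nat.factorial (n + 2) : ℝ)) ≤
      ∑' n : ℕ, x ^ 2 / 2 * (c / 3) ^ n :=
    Summable.tsum_le_tsum hterm htail_summable hgeo
  have hgeosum : ∑' n : ℕ, x ^ 2 / 2 * (c / 3) ^ n = x ^ 2 * (3 / (2 * (3 - c))) := by
    rw [tsum_mul_left, tsum_geometric_of_lt_one (by positivity) (by linarith)]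
    field_simp
  have : Real.exp x = (1 + x) + ∑' n : ℕ, x ^ (n + 2) / (Nat.factorial (n + 2) : ℝ) := by
    rw [hexp, ← hsplit, hrange]
  rw [this]
  rw [hgeosum] at htail
  linarith

private lemma int_of_bdd {Ω : Type*} [MeasurableSpace Ω] {P : Measure Ω}
    [IsProbabilityMeasure P] {f : Ω → ℝ} (hf : Measurable f) {C : ℝ}
    (h : ∀ ω, |f ω| ≤ C) : Integrable f P :=
  Integrable.mono' (integrable_const C) hf.aestronglyMeasurable
    (ae_of_all _ (by simpa [Real.norm_eq_abs] using h))

private lemma mgf_le_of_bdd {Ω : Type*} [MeasurableSpace Ω] (P : Measure Ω)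
    [IsProbabilityMeasure P] {Y : Ω → ℝ} (hY : Measurable Y) {M v t : ℝ}
    (hmean : ∫ ω, Y ω ∂P = 0) (hvar : ∫ ω, (Y ω) ^ 2 ∂P ≤ v)
    (hbd : ∀ ω, |Y ω| ≤ M) (ht : 0 ≤ t) (hc : t * M < 3) :
    mgf Y P t ≤ Real.exp (t ^ 2 * v * (3 / (2 * (3 - t * M)))) := by
  set K : ℝ := 3 / (2 * (3 - t * M)) with hKdef
  have hK0 : 0 ≤ K := by
    apply div_nonneg (by norm_num)
    nlinarith
  have : Nonempty Ω := by
    by_contra h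
    rw [not_nonempty_iff] at h
    have h1 : P Set.univ = 1 := measure_univ
    rw [Set.univ_eq_empty_iff.mpr h] at h1
    simp at h1
  have hM0 : 0 ≤ M := (abs_nonneg _).trans (hbd (Classical.arbitrary Ω))
  have hv0 : 0 ≤ v := le_trans (integral_nonneg (fun ω => sq_nonneg _)) hvar
  have hYint : Integrable Y P := int_of_bdd hY hbd
  have hY2int : Integrable (fun ω => (Y ω) ^ 2) P := by
    refine int_of_bdd (hY.pow_const 2) (C := M ^ 2) (fun ω => ?_)
    calc |Y ω ^ 2| = |Y ω| ^ 2 := abs_pow _ _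
    _ ≤ M ^ 2 := pow_le_pow_left₀ (abs_nonneg _) (hbd ω) 2
  have hexpint : Integrable (fun ω => Real.exp (t * Y ω)) P := by
    refine int_of_bdd ((hY.const_mul t).exp) (C := Real.exp (t * M)) (fun ω => ?_)
    rw [abs_of_pos (Real.exp_pos _)]
    apply Real.exp_le_exp.mpr
    calc t * Y ω ≤ |t * Y ω| := le_abs_self _
    _ = t * |Y ω| := by rw [abs_mul, abs_of_nonneg ht]
    _ ≤ t * M := mul_le_mul_of_nonneg_left (hbd ω) ht
  have hgint : Integrable (fun ω => 1 + t * Y ω + t ^ 2 * K * (Y ω) ^ 2) P :=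
    ((integrable_const 1).add (hYint.const_mul t)).add (hY2int.const_mul _)
  have hpt : ∀ ω, Real.exp (t * Y ω) ≤ 1 + t * Y ω + t ^ 2 * K * (Y ω) ^ 2 := by
    intro ω
    have habs : |t * Y ω| ≤ t * M := by
      rw [abs_mul, abs_of_nonneg ht]
      exact mul_le_mul_of_nonneg_left (hbd ω) ht
    have := exp_quad_bound habs hc
    have hsq : (t * Y ω) ^ 2 * K = t ^ 2 * K * (Y ω) ^ 2 := by ring
    linarith [this, hsq ▸ le_refl ((t * Y ω) ^ 2 * K)]
  have hsum1 : Integrable (fun ω => t * Y ω + t ^ 2 * K * Y ω ^ 2) P :=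
    (hYint.const_mul t).add (hY2int.const_mul _)
  have hint_eq : ∫ ω, (1 + t * Y ω + t ^ 2 * K * (Y ω) ^ 2) ∂P
      = 1 + t ^ 2 * K * ∫ ω, (Y ω) ^ 2 ∂P := by
    calc ∫ ω, (1 + t * Y ω + t ^ 2 * K * (Y ω) ^ 2) ∂P
        = ∫ ω, ((1 : ℝ) + (t * Y ω + t ^ 2 * K * (Y ω) ^ 2)) ∂P := by
          simp only [add_assoc]
      _ = (∫ _ω, (1 : ℝ) ∂P) + ∫ ω, (t * Y ω + t ^ 2 * K * (Y ω) ^ 2) ∂P :=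
          integral_add (integrable_const 1) hsum1
      _ = 1 + ((∫ ω, t * Y ω ∂P) + ∫ ω, t ^ 2 * K * (Y ω) ^ 2 ∂P) := by
          rw [integral_add (hYint.const_mul t) (hY2int.const_mul _), integral_const]
          simp
      _ = 1 + t ^ 2 * K * ∫ ω, (Y ω) ^ 2 ∂P := by
          rw [integral_const_mul, integral_const_mul, hmean]
          ring
  calc mgf Y P t = ∫ ω, Real.exp (t * Y ω) ∂P := rfl
    _ ≤ ∫ ω, (1 + t * Y ω + t ^ 2 * K * (Y ω) ^ 2) ∂P :=
        integral_mono hexpint hgint hpt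
    _ = 1 + t ^ 2 * K * ∫ ω, (Y ω) ^ 2 ∂P := hint_eq
    _ ≤ 1 + t ^ 2 * K * v := by
        have h := mul_le_mul_of_nonneg_left hvar (mul_nonneg (sq_nonneg t) hK0)
        linarith

    _ ≤ Real.exp (t ^ 2 * v * K) := by
        have h := Real.add_one_le_exp (t ^ 2 * v * K)
        nlinarith [h]
    _ = Real.exp (t ^ 2 * v * (3 / (2 * (3 - t * M)))) := rfl

private lemma aux_tail {Ω : Type*} [MeasurableSpace Ω] (P : Measure Ω)
    [IsProbabilityMeasure P] (n : ℕ)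
    (ξ : Fin n → Ω → ℝ) (hmeas : ∀ i, Measurable (ξ i))
    (hindep : iIndepFun ξ P)
    (μ B τ : ℝ)
    (hmean : ∀ i, ∫ ω, ξ i ω ∂P = μ)
    (hbound : ∀ i ω, |ξ i ω| ≤ B)
    (hvar : ∀ i, ∫ ω, (ξ i ω - μ) ^ 2 ∂P ≤ τ ^ 2)
    (b : Fin n → ℝ) (bmax : ℝ) (hb : ∀ i, |b i| ≤ bmax)
    (a ε : ℝ) (ha : 0 < a) (hε : 0 < ε) :
    P {ω | a * τ ^ 2 + ε ≤ ∑ i, b i * (ξ i ω - μ)} ≤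
      ENNReal.ofReal
        (Real.exp (-(6 * a * ε) / (3 * ∑ i, (b i) ^ 2 + 4 * a * B * bmax))) := by
  by_cases hS : (∑ i, (b i) ^ 2) = 0
  · have hb0 : ∀ i, b i = 0 := by
      intro i
      have h := (Finset.sum_eq_zero_iff_of_nonneg
        (fun i _ => sq_nonneg (b i))).mp hS i (Finset.mem_univ i)
      exact pow_eq_zero_iff (two_ne_zero).elim |>.mp h
    have hset : {ω | a * τ ^ 2 + ε ≤ ∑ i, b i * (ξ i ω - μ)} = (∅ : Set Ω) := by
      ext ω
      simp only [Set.mem_setOf_eq, Set.mem_empty_iff_false, iff_false, not_le]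
      have : ∑ i, b i * (ξ i ω - μ) = 0 := by simp [hb0]
      rw [this]
      positivity
    rw [hset, measure_empty]
    exact bot_le
  have hSpos : 0 < ∑ i, (b i) ^ 2 :=
    lt_of_le_of_ne (Finset.sum_nonneg fun i _ => sq_nonneg _) (Ne.symm hS)
  have hne : Nonempty (Fin n) := by
    by_contra h
    rw [not_nonempty_iff] at h
    rw [Finset.univ_eq_empty, Finset.sum_empty] at hSpos
    exact lt_irrefl _ hSpos
  set S : ℝ := ∑ i, (b i) ^ 2 with hSdef
  obtain ⟨i0⟩ := hne
  have hμB : |μ| ≤ B := by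
    rw [← hmean i0]
    have := norm_integral_le_of_norm_le_const (μ := P) (f := ξ i0) (C := B)
      (ae_of_all _ fun ω => by simpa [Real.norm_eq_abs] using hbound i0 ω)
    simpa [Real.norm_eq_abs, measure_univ] using this
  have hB0 : 0 ≤ B := (abs_nonneg μ).trans hμB
  have hbmax0 : 0 ≤ bmax := (abs_nonneg _).trans (hb i0)
  set D : ℝ := 3 * S + 4 * a * B * bmax with hDdef
  have hD : 0 < D := by
    have h1 : 0 < 3 * S := by linarith
    have h2 : 0 ≤ 4 * a * B * bmax := by positivity
    linarith
  set t : ℝ := 6 * a / D with htdef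
  have ht : 0 < t := by positivity
  set M : ℝ := 2 * B * bmax with hMdef
  have hM0 : 0 ≤ M := by positivity
  have hc : t * M < 3 := by
    rw [htdef, hMdef, div_mul_eq_mul_div, div_lt_iff₀ hD, hDdef]
    nlinarith
  set Y : Fin n → Ω → ℝ := fun i ω => b i * (ξ i ω - μ) with hYdef
  have hYmeas : ∀ i, Measurable (Y i) := fun i =>
    ((hmeas i).sub measurable_const).const_mul (b i)
  have hYindep : iIndepFun Y P := by
    have := hindep.comp (fun i x => b i * (x - μ))
      (fun i => (measurable_id.sub measurable_const).const_mul (b i))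
    exact this
  have hξint : ∀ i, Integrable (ξ i) P := fun i => int_of_bdd (hmeas i) (hbound i)
  have hYmean : ∀ i, ∫ ω, Y i ω ∂P = 0 := by
    intro i
    rw [hYdef]
    simp only
    rw [integral_const_mul, integral_sub (hξint i) (integrable_const μ), hmean i,
      integral_const]
    simp
  have hYvar : ∀ i, ∫ ω, (Y i ω) ^ 2 ∂P ≤ (b i) ^ 2 * τ ^ 2 := by
    intro i
    have heq : ∀ ω, (Y i ω) ^ 2 = (b i) ^ 2 * (ξ i ω - μ) ^ 2 := fun ω => by
      rw [hYdef]; ring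
    simp_rw [heq]
    rw [integral_const_mul]
    exact mul_le_mul_of_nonneg_left (hvar i) (sq_nonneg _)
  have hξμ : ∀ i ω, |ξ i ω - μ| ≤ 2 * B := by
    intro i ω
    rw [sub_eq_add_neg]
    refine (abs_add_le _ _).trans ?_
    rw [abs_neg]
    linarith [hbound i ω, hμB]
  have hYbd : ∀ i ω, |Y i ω| ≤ M := by
    intro i ω
    rw [hYdef]
    simp only
    rw [abs_mul]
    calc |b i| * |ξ i ω - μ| ≤ bmax * (2 * B) :=
        mul_le_mul (hb i) (hξμ i ω) (abs_nonneg _) hbmax0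
    _ = M := by rw [hMdef]; ring
  have hexpint : ∀ i, Integrable (fun ω => Real.exp (t * Y i ω)) P := by
    intro i
    refine int_of_bdd ((hYmeas i).const_mul t).exp (C := Real.exp (t * M)) (fun ω => ?_)
    rw [abs_of_pos (Real.exp_pos _)]
    apply Real.exp_le_exp.mpr
    calc t * Y i ω ≤ |t * Y i ω| := le_abs_self _
    _ = t * |Y i ω| := by rw [abs_mul, abs_of_nonneg ht.le]
    _ ≤ t * M := mul_le_mul_of_nonneg_left (hYbd i ω) ht.le
  set X : Ω → ℝ := ∑ i, Y i with hXdef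
  have hsetX : {ω | a * τ ^ 2 + ε ≤ ∑ i, b i * (ξ i ω - μ)}
      = {ω | a * τ ^ 2 + ε ≤ X ω} := by
    ext ω
    simp [hXdef, Finset.sum_apply, hYdef]
  have hintX : Integrable (fun ω => Real.exp (t * X ω)) P :=
    hYindep.integrable_exp_mul_sum hYmeas (fun i _ => hexpint i)
  have hchern := measure_ge_le_exp_mul_mgf (μ := P) (X := X) (a * τ ^ 2 + ε) ht.le hintX
  have hmgfsum : mgf X P t = ∏ i, mgf (Y i) P t := hYindep.mgf_sum hYmeas Finset.univ
  set K : ℝ := 3 / (2 * (3 - t * M)) with hKdef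
  have hprod : ∏ i, mgf (Y i) P t ≤ ∏ i, Real.exp (t ^ 2 * ((b i) ^ 2 * τ ^ 2) * K) :=
    Finset.prod_le_prod (fun i _ => mgf_nonneg)
      (fun i _ => mgf_le_of_bdd P (hYmeas i) (hYmean i) (hYvar i) (hYbd i) ht.le hc)
  have hprodexp : ∏ i, Real.exp (t ^ 2 * ((b i) ^ 2 * τ ^ 2) * K)
      = Real.exp (t ^ 2 * τ ^ 2 * K * S) := by
    rw [← Real.exp_sum]
    congr 1
    rw [hSdef, Finset.mul_sum]
    exact Finset.sum_congr rfl (fun i _ => by ring)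
  have hKval : K = D / (6 * S) := by
    have h3c : 3 - t * M = 9 * S / D := by
      rw [htdef, hMdef, hDdef]
      field_simp
      ring
    rw [hKdef, h3c]
    field_simp
    ring
  have hexpeq : -t * (a * τ ^ 2 + ε) + t ^ 2 * τ ^ 2 * K * S = -(6 * a * ε) / D := by
    rw [hKval, htdef]
    field_simp
    ring
  have hfinal : Real.exp (-t * (a * τ ^ 2 + ε)) * mgf X P t
      ≤ Real.exp (-(6 * a * ε) / D) := by
    calc Real.exp (-t * (a * τ ^ 2 + ε)) * mgf X P t
        ≤ Real.exp (-t * (a * τ ^ 2 + ε)) * Real.exp (t ^ 2 * τ ^ 2 * K * S) := by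
          apply mul_le_mul_of_nonneg_left _ (Real.exp_pos _).le
          rw [hmgfsum]
          exact hprod.trans_eq hprodexp
      _ = Real.exp (-t * (a * τ ^ 2 + ε) + t ^ 2 * τ ^ 2 * K * S) := (Real.exp_add _ _).symm
      _ = Real.exp (-(6 * a * ε) / D) := by rw [hexpeq]
  rw [hsetX, ← ENNReal.ofReal_toReal (measure_ne_top P _)]
  exact ENNReal.ofReal_le_ofReal (hchern.trans hfinal)

/-- Weighted Bernstein-type inequality: if `ξ_1, …, ξ_n` are independent,
bounded by `B`, with common mean `μ` and variance at most `τ²`, and `b_i`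
are deterministic weights with `b_max = max_i |b_i|`, then for all
`a, ε > 0`,
`P[∑ b_i (ξ_i - μ) ≥ aτ² + ε] ≤ exp(-6aε / (3 ∑ b_i² + 4aB b_max))`,
and the same bound holds with `ξ_i - μ` replaced by `μ - ξ_i`. -/
theorem stmt_7 (Ω : Type*) [MeasurableSpace Ω] (P : Measure Ω)
    [IsProbabilityMeasure P] (n : ℕ) (hn : 0 < n)
    (ξ : Fin n → Ω → ℝ) (hmeas : ∀ i, Measurable (ξ i))
    (hindep : iIndepFun ξ P)
    (μ B τ : ℝ)
    (hmean : ∀ i, ∫ ω, ξ i ω ∂P = μ)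
    (hbound : ∀ i ω, |ξ i ω| ≤ B)
    (hvar : ∀ i, ∫ ω, (ξ i ω - μ) ^ 2 ∂P ≤ τ ^ 2)
    (b : Fin n → ℝ) (bmax : ℝ)
    (hbmax : IsGreatest (Set.range fun i => |b i|) bmax)
    (a ε : ℝ) (ha : 0 < a) (hε : 0 < ε) :
    P {ω | a * τ ^ 2 + ε ≤ ∑ i, b i * (ξ i ω - μ)} ≤
      ENNReal.ofReal
        (Real.exp (-(6 * a * ε) / (3 * ∑ i, (b i) ^ 2 + 4 * a * B * bmax))) ∧
    P {ω | a * τ ^ 2 + ε ≤ ∑ i, b i * (μ - ξ i ω)} ≤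
      ENNReal.ofReal
        (Real.exp (-(6 * a * ε) / (3 * ∑ i, (b i) ^ 2 + 4 * a * B * bmax))) := by
  have hb : ∀ i, |b i| ≤ bmax := fun i => hbmax.2 ⟨i, rfl⟩
  constructor
  · exact aux_tail P n ξ hmeas hindep μ B τ hmean hbound hvar b bmax hb a ε ha hε
  · have hb' : ∀ i, |(-b i)| ≤ bmax := fun i => by rw [abs_neg]; exact hb i
    have h := aux_tail P n ξ hmeas hindep μ B τ hmean hbound hvar
      (fun i => -b i) bmax hb' a ε ha hε
    have hset : {ω | a * τ ^ 2 + ε ≤ ∑ i, (fun i => -b i) i * (ξ i ω - μ)}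
        = {ω | a * τ ^ 2 + ε ≤ ∑ i, b i * (μ - ξ i ω)} := by
      ext ω
      simp only [Set.mem_setOf_eq]
      have : ∑ i, (fun i => -b i) i * (ξ i ω - μ) = ∑ i, b i * (μ - ξ i ω) :=
        Finset.sum_congr rfl (fun i _ => by ring)
      rw [this]
    have hsq : (∑ i, ((fun i => -b i) i) ^ 2) = ∑ i, (b i) ^ 2 :=
      Finset.sum_congr rfl (fun i _ => by ring)
    rw [hset, hsq] at h
    exact h
end

section
/- Let $A$ and $B$ be bounded symmetric positive semidefinite operators on a Hilbert space, $\lambda > 0$, and suppose $\|(B + \lambda I)^{-1/2}(A + \lambda I)^{1/2}\| \le c$ for some $c \ge 1$. Then for every $0 < s \le 1$, $\|(A + \lambda I)^{s/2}(B + \lambda I)^{-s/2}\| \le c^{s}$. -/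
open Set

open scoped NNReal ENNReal

private lemma aux_biSup_nnnorm (S : Set ℂ) :
    ⨆ k ∈ S, (‖k‖₊ : ℝ≥0∞) = ⨆ k ∈ S \ {0}, (‖k‖₊ : ℝ≥0∞) := by
  apply le_antisymm
  · refine iSup₂_le fun k hk => ?_
    rcases eq_or_ne k 0 with h | h
    · simp [h]
    · exact le_iSup₂_of_le k ⟨hk, h⟩ le_rfl
  · exact iSup₂_le fun k hk => le_iSup₂_of_le k hk.1 le_rfl

private lemma aux_specRad_comm {𝔸 : Type*} [Ring 𝔸] [Algebra ℂ 𝔸] (a b : 𝔸) :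
    spectralRadius ℂ (a * b) = spectralRadius ℂ (b * a) := by
  rw [spectralRadius, spectralRadius, aux_biSup_nnnorm,
    aux_biSup_nnnorm (spectrum ℂ (b * a)), spectrum.nonzero_mul_comm]

set_option maxHeartbeats 1000000 in
/-- If `A, B` are bounded selfadjoint positive semidefinite operators, `λ > 0`,
and `‖(B+λI)^{-1/2}(A+λI)^{1/2}‖ ≤ c` with `c ≥ 1`, then for every
`0 < s ≤ 1`, `‖(A+λI)^{s/2}(B+λI)^{-s/2}‖ ≤ c^s` (fractional powers via
continuous functional calculus). -/
theorem stmt_11 (H : Type*) [NormedAddCommGroup H] [InnerProductSpace ℂ H]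
    [CompleteSpace H] (A B : H →L[ℂ] H)
    (hA : IsSelfAdjoint A) (hB : IsSelfAdjoint B)
    (hApos : A.IsPositive) (hBpos : B.IsPositive)
    (lam c : ℝ) (hlam : 0 < lam) (hc : 1 ≤ c)
    (hAB : ‖cfc (fun σ : ℝ => (σ + lam) ^ (-(1 / 2 : ℝ))) B *
        cfc (fun σ : ℝ => (σ + lam) ^ ((1 / 2 : ℝ))) A‖ ≤ c) :
    ∀ s : ℝ, 0 < s → s ≤ 1 →
      ‖cfc (fun σ : ℝ => (σ + lam) ^ (s / 2)) A *
          cfc (fun σ : ℝ => (σ + lam) ^ (-(s / 2))) B‖ ≤ c ^ s := by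
  intro s hs hs1
  have hc0 : (0 : ℝ) < c := lt_of_lt_of_le one_pos hc
  rcases subsingleton_or_nontrivial H with hH | hH
  · have hz : ∀ x : H →L[ℂ] H, x = 0 := fun x => by
      ext w; exact Subsingleton.elim _ _
    rw [hz (cfc (fun σ : ℝ => (σ + lam) ^ (s / 2)) A *
          cfc (fun σ : ℝ => (σ + lam) ^ (-(s / 2))) B)]
    simpa using (Real.rpow_nonneg hc0.le s)
  · have hone : (1 : H →L[ℂ] H) ≠ 0 := by
      obtain ⟨x, hx⟩ := exists_ne (0 : H)
      intro h1
      apply hx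
      calc x = (1 : H →L[ℂ] H) x := rfl
        _ = (0 : H →L[ℂ] H) x := by rw [h1]
        _ = 0 := rfl
    haveI : Nontrivial (H →L[ℂ] H) := nontrivial_of_ne 1 0 hone
    have hSA : spectrum ℝ A ⊆ Set.Ici 0 := fun x hx =>
      spectrum_nonneg_of_nonneg ((ContinuousLinearMap.nonneg_iff_isPositive A).mpr hApos) hx
    have hSB : spectrum ℝ B ⊆ Set.Ici 0 := fun x hx =>
      spectrum_nonneg_of_nonneg ((ContinuousLinearMap.nonneg_iff_isPositive B).mpr hBpos) hx
    set f : ℝ → ℝ → ℝ := fun r σ => (σ + lam) ^ r with hfdef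
    have hposx : ∀ x ∈ Set.Ici (0 : ℝ), 0 < x + lam := fun x hx => by
      have : (0 : ℝ) ≤ x := hx
      linarith
    have hctf : ∀ r : ℝ, ContinuousOn (f r) (Set.Ici 0) := by
      intro r x hx
      exact (((continuous_add_right lam).continuousAt).rpow_const
        (Or.inl (hposx x hx).ne')).continuousWithinAt
    have hcA : ∀ r : ℝ, ContinuousOn (f r) (spectrum ℝ A) := fun r => (hctf r).mono hSA
    have hcB : ∀ r : ℝ, ContinuousOn (f r) (spectrum ℝ B) := fun r => (hctf r).mono hSB
    set u : ℝ → (H →L[ℂ] H) := fun r => cfc (f r) A with hu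
    set v : ℝ → (H →L[ℂ] H) := fun r => cfc (f r) B with hv
    have humul : ∀ p q : ℝ, u p * u q = u (p + q) := by
      intro p q
      simp only [hu]
      rw [← cfc_mul (f p) (f q) A (hcA p) (hcA q)]
      exact cfc_congr fun x hx => (Real.rpow_add (hposx x (hSA hx)) p q).symm
    have hvmul : ∀ p q : ℝ, v p * v q = v (p + q) := by
      intro p q
      simp only [hv]
      rw [← cfc_mul (f p) (f q) B (hcB p) (hcB q)]
      exact cfc_congr fun x hx => (Real.rpow_add (hposx x (hSB hx)) p q).symm
    have hsu : ∀ r : ℝ, IsSelfAdjoint (u r) := fun r => cfc_predicate (f r) A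
    have hsv : ∀ r : ℝ, IsSelfAdjoint (v r) := fun r => cfc_predicate (f r) B
    have hstar : ∀ p q : ℝ, star (u p * v q) = v q * u p := fun p q => by
      rw [star_mul, (hsu p).star_eq, (hsv q).star_eq]
    have hnorm_swap : ∀ p q : ℝ, ‖v q * u p‖ = ‖u p * v q‖ := fun p q => by
      rw [← hstar, norm_star]
    have hnnnorm_swap : ∀ p q : ℝ, ‖v q * u p‖₊ = ‖u p * v q‖₊ := fun p q => by
      rw [← hstar, nnnorm_star]
    have hunit_u : ∀ r : ℝ, IsUnit (u r) := fun r =>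
      (isUnit_cfc_iff (f r) A (hcA r) hA).mpr
        (fun x hx => (Real.rpow_pos_of_pos (hposx x (hSA hx)) r).ne')
    have hunit_v : ∀ r : ℝ, IsUnit (v r) := fun r =>
      (isUnit_cfc_iff (f r) B (hcB r) hB).mpr
        (fun x hx => (Real.rpow_pos_of_pos (hposx x (hSB hx)) r).ne')
    set h : ℝ → ℝ := fun r => ‖u r * v (-r)‖ with hh
    have hhpos : ∀ r : ℝ, 0 < h r := fun r => by
      have : u r * v (-r) ≠ 0 := ((hunit_u r).mul (hunit_v (-r))).ne_zero
      simpa [hh] using norm_pos_iff.mpr this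
    have hu0 : u 0 = 1 := by
      simp only [hu]
      calc cfc (f 0) A = cfc (fun _ : ℝ => (1 : ℝ)) A :=
            cfc_congr fun x _ => Real.rpow_zero _
        _ = 1 := cfc_const_one ℝ A
    have hv0 : v 0 = 1 := by
      simp only [hv]
      calc cfc (f 0) B = cfc (fun _ : ℝ => (1 : ℝ)) B :=
            cfc_congr fun x _ => Real.rpow_zero _
        _ = 1 := cfc_const_one ℝ B
    have h0 : h 0 = 1 := by
      simp only [hh, neg_zero, hu0, hv0, mul_one, norm_one]
    have hhalf : h (1 / 2) ≤ c := by
      have e : h (1 / 2) = ‖v (-(1 / 2)) * u (1 / 2)‖ := (hnorm_swap _ _).symm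
      rw [e]
      simp only [hu, hv, hfdef]
      exact hAB
    -- midpoint inequality
    have key : ∀ p q : ℝ, h ((p + q) / 2) ^ 2 ≤ h p * h q := by
      intro p q
      set m : ℝ := (p + q) / 2 with hm
      set X : H →L[ℂ] H := u m * v (-m) with hX
      have e1 : star X * X = v (-m) * (u (p + q) * v (-m)) := by
        rw [hX, hstar, mul_assoc, ← mul_assoc (u m), humul]
        congr 2
        rw [hm]; ring_nf
      have e2 : v (-m) * v (-m) = v (-q) * v (-p) := by
        rw [hvmul, hvmul]
        congr 1
        rw [hm]; ring_nf
      have e3 : u (p + q) = u p * u q := (humul p q).symm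
      have sa : IsSelfAdjoint (star X * X) := IsSelfAdjoint.star_mul_self X
      have c1 : (‖X‖₊ : ℝ≥0∞) ^ 2 = (‖star X * X‖₊ : ℝ≥0∞) := by
        rw [CStarRing.nnnorm_star_mul_self]
        push_cast
        ring
      have c2 : (‖star X * X‖₊ : ℝ≥0∞) = spectralRadius ℂ (star X * X) :=
        sa.spectralRadius_eq_nnnorm.symm
      have c3 : spectralRadius ℂ (star X * X)
          = spectralRadius ℂ ((u q * v (-q)) * (v (-p) * u p)) := by
        rw [e1, aux_specRad_comm]
        have e4 : u (p + q) * v (-m) * v (-m) = u p * (u q * (v (-q) * v (-p))) := by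
          rw [mul_assoc, e2, e3, mul_assoc]
        rw [e4, aux_specRad_comm]
        simp only [mul_assoc]
      have c4 : spectralRadius ℂ ((u q * v (-q)) * (v (-p) * u p))
          ≤ (‖u q * v (-q)‖₊ * ‖v (-p) * u p‖₊ : ℝ≥0) := by
        refine (spectrum.spectralRadius_le_nnnorm (𝕜 := ℂ) _).trans ?_
        exact_mod_cast ENNReal.coe_le_coe.mpr (nnnorm_mul_le _ _)
      have cc : (‖X‖₊ : ℝ≥0∞) ^ 2 ≤ (‖u q * v (-q)‖₊ * ‖v (-p) * u p‖₊ : ℝ≥0) := by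
        rw [c1, c2, c3]; exact c4
      have cc' : ‖X‖₊ ^ 2 ≤ ‖u q * v (-q)‖₊ * ‖v (-p) * u p‖₊ := by
        have := cc
        rw [show ((‖X‖₊ : ℝ≥0∞)) ^ 2 = ((‖X‖₊ ^ 2 : ℝ≥0) : ℝ≥0∞) by push_cast; ring] at this
        exact_mod_cast this
      have cr : ‖X‖ ^ 2 ≤ ‖u q * v (-q)‖ * ‖v (-p) * u p‖ := by
        have := cc'
        have h2 : (‖X‖₊ ^ 2 : ℝ) ≤ (‖u q * v (-q)‖₊ * ‖v (-p) * u p‖₊ : ℝ≥0) :=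
          NNReal.coe_le_coe.mpr this
        push_cast at h2
        simpa using h2
      calc h ((p + q) / 2) ^ 2 = ‖X‖ ^ 2 := by rw [hh]
        _ ≤ ‖u q * v (-q)‖ * ‖v (-p) * u p‖ := cr
        _ = h p * h q := by rw [hnorm_swap]; simp only [hh]; ring
    -- continuity of u and v
    have hcu : Continuous u := by
      set U : ℝ → C(spectrum ℝ A, ℝ) :=
        fun r => ⟨(spectrum ℝ A).restrict (f r), (hcA r).restrict⟩ with hU
      have hUc : Continuous U := by
        apply ContinuousMap.continuous_of_continuous_uncurry
        have hj : Continuous fun z : ℝ × (spectrum ℝ A) => ((z.2 : ℝ) + lam) ^ z.1 :=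
          Continuous.rpow (by fun_prop) continuous_fst
            (fun z => Or.inl (hposx _ (hSA z.2.2)).ne')
        exact hj
      have he : u = fun r => cfcHom hA (U r) :=
        funext fun r => cfc_apply (f r) A hA (hcA r)
      rw [he]
      exact (cfcHom_isClosedEmbedding hA).continuous.comp hUc
    have hcv : Continuous v := by
      set V : ℝ → C(spectrum ℝ B, ℝ) :=
        fun r => ⟨(spectrum ℝ B).restrict (f r), (hcB r).restrict⟩ with hV
      have hVc : Continuous V := by
        apply ContinuousMap.continuous_of_continuous_uncurry
        have hj : Continuous fun z : ℝ × (spectrum ℝ B) => ((z.2 : ℝ) + lam) ^ z.1 :=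
          Continuous.rpow (by fun_prop) continuous_fst
            (fun z => Or.inl (hposx _ (hSB z.2.2)).ne')
        exact hj
      have he : v = fun r => cfcHom hB (V r) :=
        funext fun r => cfc_apply (f r) B hB (hcB r)
      rw [he]
      exact (cfcHom_isClosedEmbedding hB).continuous.comp hVc
    have hch : Continuous h := by
      rw [hh]
      exact (hcu.mul (hcv.comp continuous_neg)).norm
    -- the function F
    set L : ℝ := Real.log c with hL
    set E : ℝ → ℝ := fun r => Real.exp (L * (-(2 * r))) with hE
    set F : ℝ → ℝ := fun r => h r * E r with hF
    have hEpos : ∀ r, 0 < E r := fun r => Real.exp_pos _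
    have hFpos : ∀ r, 0 < F r := fun r => mul_pos (hhpos r) (hEpos r)
    have hFc : Continuous F := by
      rw [hF]
      exact hch.mul (by fun_prop)
    have keyF : ∀ p q : ℝ, F ((p + q) / 2) ^ 2 ≤ F p * F q := by
      intro p q
      have e : E ((p + q) / 2) ^ 2 = E p * E q := by
        simp only [hE]
        rw [sq, ← Real.exp_add, ← Real.exp_add]
        congr 1
        ring
      have expand : F ((p + q) / 2) ^ 2 = h ((p + q) / 2) ^ 2 * (E p * E q) := by
        simp only [hF]; rw [mul_pow, e]
      rw [expand]
      calc h ((p + q) / 2) ^ 2 * (E p * E q)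
          ≤ (h p * h q) * (E p * E q) :=
            mul_le_mul_of_nonneg_right (key p q)
              (mul_nonneg (hEpos p).le (hEpos q).le)
        _ = F p * F q := by simp only [hF]; ring
    obtain ⟨r0, hr0K, hr0max⟩ :=
      (isCompact_Icc (a := (0 : ℝ)) (b := 1 / 2)).exists_isMaxOn
        (Set.nonempty_Icc.mpr (by norm_num)) hFc.continuousOn
    have hr0max' : ∀ x ∈ Set.Icc (0 : ℝ) (1 / 2), F x ≤ F r0 := fun x hx => hr0max hx
    have hF0 : F 0 ≤ 1 := by
      simp only [hF, hE, h0]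
      simp
    have hEhalf : E (1 / 2) = c⁻¹ := by
      simp only [hE, hL]
      rw [show Real.log c * (-(2 * (1 / 2 : ℝ))) = -Real.log c by ring,
        Real.exp_neg, Real.exp_log hc0]
    have hFhalf : F (1 / 2) ≤ 1 := by
      simp only [hF]
      rw [hEhalf]
      calc h (1 / 2) * c⁻¹ ≤ c * c⁻¹ :=
            mul_le_mul_of_nonneg_right hhalf (by positivity)
        _ = 1 := mul_inv_cancel₀ hc0.ne'
    have hM1 : F r0 ≤ 1 := by
      rcases le_or_gt r0 (1 / 4) with hcase | hcase
      · have h2r0 : (2 * r0) ∈ Set.Icc (0 : ℝ) (1 / 2) :=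
          ⟨by linarith [hr0K.1], by linarith⟩
        have hk := keyF 0 (2 * r0)
        rw [show (0 + 2 * r0) / 2 = r0 by ring] at hk
        have hle : F (2 * r0) ≤ F r0 := hr0max' _ h2r0
        nlinarith [hFpos r0, hFpos 0, hFpos (2 * r0), hF0]
      · have hp : (2 * r0 - 1 / 2) ∈ Set.Icc (0 : ℝ) (1 / 2) :=
          ⟨by linarith, by linarith [hr0K.2]⟩
        have hk := keyF (2 * r0 - 1 / 2) (1 / 2)
        rw [show ((2 * r0 - 1 / 2) + 1 / 2) / 2 = r0 by ring] at hk
        have hle : F (2 * r0 - 1 / 2) ≤ F r0 := hr0max' _ hp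
        nlinarith [hFpos r0, hFpos (2 * r0 - 1 / 2), hFpos (1 / 2), hFhalf]
    have hs2 : s / 2 ∈ Set.Icc (0 : ℝ) (1 / 2) := ⟨by linarith, by linarith⟩
    have hFs : F (s / 2) ≤ 1 := (hr0max' _ hs2).trans hM1
    have hEs : E (s / 2) = (c ^ s)⁻¹ := by
      simp only [hE, hL]
      rw [Real.rpow_def_of_pos hc0, ← Real.exp_neg]
      congr 1
      ring
    have hgoal : h (s / 2) ≤ c ^ s := by
      have hcs : (0 : ℝ) < c ^ s := Real.rpow_pos_of_pos hc0 s
      have : h (s / 2) * (c ^ s)⁻¹ ≤ 1 := by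
        have := hFs
        simp only [hF] at this
        rwa [hEs] at this
      calc h (s / 2) = h (s / 2) * (c ^ s)⁻¹ * (c ^ s) := by
            field_simp
        _ ≤ 1 * (c ^ s) := mul_le_mul_of_nonneg_right this hcs.le
        _ = c ^ s := one_mul _
    simp only [hh, hu, hv, hfdef] at hgoal
    exact hgoal
end

section
/- (Cordes inequality for matrices) Let $P$ and $Q$ be symmetric positive semidefinite $n \times n$ real matrices and let $0 < s \le 1$. Then $\|P^s Q^s\| \le \|P Q\|^s$, where $\|\cdot\|$ denotes the operator (spectral) norm and fractional powers are defined by the spectral theorem. -/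
open scoped Matrix.Norms.L2Operator

lemma norm_diagonal_le {n : ℕ} (d : Fin n → ℝ) (b : ℝ) (hb : 0 ≤ b)
    (hd : ∀ i, |d i| ≤ b) : ‖Matrix.diagonal d‖ ≤ b := by
  rw [Matrix.l2_opNorm_def]
  apply ContinuousLinearMap.opNorm_le_bound _ hb
  intro x
  rw [EuclideanSpace.norm_eq, EuclideanSpace.norm_eq]
  have hx : ∀ i, ((Matrix.toEuclideanLin ≪≫ₗ LinearMap.toContinuousLinearMap)
      (Matrix.diagonal d) x) i = d i * x i := by
    intro i
    simp [Matrix.toEuclideanLin_apply, Matrix.mulVec_diagonal]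
  calc √(∑ i, ‖((Matrix.toEuclideanLin ≪≫ₗ LinearMap.toContinuousLinearMap)
      (Matrix.diagonal d) x) i‖ ^ 2) = √(∑ i, (d i * x i) ^ 2) := by
        congr 1; refine Finset.sum_congr rfl fun i _ => ?_; rw [hx i, Real.norm_eq_abs, sq_abs]
    _ ≤ √(∑ i, b ^ 2 * x i ^ 2) := by
        apply Real.sqrt_le_sqrt
        refine Finset.sum_le_sum fun i _ => ?_
        rw [mul_pow]
        have h2 : d i ^ 2 ≤ b ^ 2 := by nlinarith [hd i, sq_abs (d i), abs_nonneg (d i)]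
        exact mul_le_mul_of_nonneg_right h2 (sq_nonneg _)
    _ = b * √(∑ i, ‖x i‖ ^ 2) := by
        rw [← Finset.mul_sum, Real.sqrt_mul (by positivity), Real.sqrt_sq hb]
        congr 2; exact Finset.sum_congr rfl fun i _ => by rw [Real.norm_eq_abs, sq_abs]


lemma norm_one_le' {n : ℕ} : ‖(1 : Matrix (Fin n) (Fin n) ℝ)‖ ≤ 1 := by
  rw [Matrix.cstar_norm_def, map_one]
  exact ContinuousLinearMap.norm_id_le

lemma norm_unitary_le {n : ℕ} (U : Matrix (Fin n) (Fin n) ℝ)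
    (hU : star U * U = 1) : ‖U‖ ≤ 1 := by
  have h1 : ‖U‖ * ‖U‖ = ‖star U * U‖ := (CStarRing.norm_star_mul_self).symm
  rw [hU] at h1
  nlinarith [norm_nonneg U, norm_one_le' (n := n)]

lemma norm_hermitian_le {n : ℕ} {H : Matrix (Fin n) (Fin n) ℝ} (hH : H.IsHermitian)
    {b : ℝ} (hb : 0 ≤ b) (hd : ∀ i, |hH.eigenvalues i| ≤ b) : ‖H‖ ≤ b := by
  set U : Matrix (Fin n) (Fin n) ℝ := (hH.eigenvectorUnitary : Matrix (Fin n) (Fin n) ℝ) with hUdef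
  have hU : star U * U = 1 := Matrix.mem_unitaryGroup_iff'.mp hH.eigenvectorUnitary.2
  have hU' : star (star U) * star U = 1 := by
    rw [star_star]; exact Matrix.mem_unitaryGroup_iff.mp hH.eigenvectorUnitary.2
  have hD : ‖Matrix.diagonal (RCLike.ofReal ∘ hH.eigenvalues : Fin n → ℝ)‖ ≤ b := by
    rw [RCLike.ofReal_real_eq_id]
    exact norm_diagonal_le _ b hb hd
  calc ‖H‖ = ‖U * Matrix.diagonal (RCLike.ofReal ∘ hH.eigenvalues) * star U‖ := by
        conv_lhs => rw [hH.spectral_theorem, Unitary.conjStarAlgAut_apply]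
    _ ≤ ‖U * Matrix.diagonal (RCLike.ofReal ∘ hH.eigenvalues)‖ * ‖star U‖ := norm_mul_le _ _
    _ ≤ ‖U‖ * ‖Matrix.diagonal (RCLike.ofReal ∘ hH.eigenvalues)‖ * ‖star U‖ := by
        exact mul_le_mul_of_nonneg_right (norm_mul_le _ _) (norm_nonneg _)
    _ ≤ 1 * b * 1 := by
        have h1 : ‖U‖ ≤ 1 := norm_unitary_le U hU
        have h2 : ‖star U‖ ≤ 1 := norm_unitary_le _ hU'
        have h3 : ‖U‖ * ‖Matrix.diagonal (RCLike.ofReal ∘ hH.eigenvalues : Fin n → ℝ)‖ ≤ 1 * b :=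
          mul_le_mul h1 hD (norm_nonneg _) zero_le_one
        exact mul_le_mul h3 h2 (norm_nonneg _) (by simpa using hb)
    _ = b := by ring

open scoped ENNReal NNReal

lemma radius_swap {n : ℕ} (a b : Matrix (Fin n) (Fin n) ℝ) :
    spectralRadius ℝ (a * b) = spectralRadius ℝ (b * a) := by
  have key : ∀ x y : Matrix (Fin n) (Fin n) ℝ,
      spectralRadius ℝ (x * y) ≤ spectralRadius ℝ (y * x) := by
    intro x y
    refine iSup₂_le fun k hk => ?_
    rcases eq_or_ne k 0 with rfl | hk0
    · simp
    · have hmem : k ∈ spectrum ℝ (x * y) \ {0} := ⟨hk, hk0⟩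
      rw [spectrum.nonzero_mul_comm x y] at hmem
      exact le_iSup₂ (f := fun k (_ : k ∈ spectrum ℝ (y * x)) => (‖k‖₊ : ℝ≥0∞)) k hmem.1
  exact le_antisymm (key a b) (key b a)

lemma nnnorm_le_radius {n : ℕ} [NeZero n] {H : Matrix (Fin n) (Fin n) ℝ}
    (hH : H.IsHermitian) : (‖H‖₊ : ℝ≥0∞) ≤ spectralRadius ℝ H := by
  haveI : NormOneClass (Matrix (Fin n) (Fin n) ℝ) := ⟨CStarRing.norm_one⟩
  set r := spectralRadius ℝ H with hr
  have hrtop : r ≠ ⊤ :=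
    (lt_of_le_of_lt (spectrum.spectralRadius_le_nnnorm H) ENNReal.coe_lt_top).ne
  have hb : ∀ i, |hH.eigenvalues i| ≤ r.toReal := by
    intro i
    have hmem : hH.eigenvalues i ∈ spectrum ℝ H := by
      rw [hH.spectrum_real_eq_range_eigenvalues]; exact ⟨i, rfl⟩
    have h1 : (‖hH.eigenvalues i‖₊ : ℝ≥0∞) ≤ r :=
      le_iSup₂ (f := fun k (_ : k ∈ spectrum ℝ H) => (‖k‖₊ : ℝ≥0∞)) _ hmem
    have h2 := ENNReal.toReal_mono hrtop h1
    simpa [Real.norm_eq_abs] using h2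
  have hnorm : ‖H‖ ≤ r.toReal := norm_hermitian_le hH ENNReal.toReal_nonneg hb
  rw [← ENNReal.coe_toNNReal hrtop, ENNReal.coe_le_coe, ← NNReal.coe_le_coe, coe_nnnorm]
  exact hnorm

lemma spectrum_nonneg_of_posSemidef {n : ℕ} {P : Matrix (Fin n) (Fin n) ℝ}
    (hP : P.IsHermitian) (hPpos : P.PosSemidef) {x : ℝ} (hx : x ∈ spectrum ℝ P) : 0 ≤ x := by
  rw [hP.spectrum_real_eq_range_eigenvalues] at hx
  obtain ⟨i, rfl⟩ := hx
  exact hPpos.eigenvalues_nonneg i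

lemma rpow_continuous {s : ℝ} (hs : 0 ≤ s) : Continuous (fun x : ℝ => x ^ s) :=
  continuous_iff_continuousAt.mpr fun x => Real.continuousAt_rpow_const x s (Or.inr hs)

lemma cfc_rpow_mul {n : ℕ} {P : Matrix (Fin n) (Fin n) ℝ}
    (hP : P.IsHermitian) (hPpos : P.PosSemidef) {s t : ℝ} (hs : 0 ≤ s) (ht : 0 ≤ t)
    (hst : s + t ≠ 0) :
    cfc (fun x : ℝ => x ^ s) P * cfc (fun x : ℝ => x ^ t) P
      = cfc (fun x : ℝ => x ^ (s + t)) P := by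
  rw [← cfc_mul _ _ P ((rpow_continuous hs).continuousOn) ((rpow_continuous ht).continuousOn)]
  exact cfc_congr fun x hx =>
    (Real.rpow_add' (spectrum_nonneg_of_posSemidef hP hPpos hx) hst).symm

lemma midpoint_step {n : ℕ} [NeZero n] {P Q : Matrix (Fin n) (Fin n) ℝ}
    (hP : P.IsHermitian) (hQ : Q.IsHermitian) (hPpos : P.PosSemidef) (hQpos : Q.PosSemidef)
    {c : ℝ} (hc : 0 ≤ c) {s t : ℝ} (hs : 0 ≤ s) (ht : 0 < t)
    (Hs : ‖cfc (fun x : ℝ => x ^ s) P * cfc (fun x : ℝ => x ^ s) Q‖ ≤ c ^ s)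
    (Ht : ‖cfc (fun x : ℝ => x ^ t) P * cfc (fun x : ℝ => x ^ t) Q‖ ≤ c ^ t) :
    ‖cfc (fun x : ℝ => x ^ ((s + t) / 2)) P * cfc (fun x : ℝ => x ^ ((s + t) / 2)) Q‖
      ≤ c ^ ((s + t) / 2) := by
  haveI : NormOneClass (Matrix (Fin n) (Fin n) ℝ) := ⟨CStarRing.norm_one⟩
  set u : ℝ := (s + t) / 2 with hu
  have hu0 : 0 < u := by rw [hu]; linarith
  set A : ℝ → Matrix (Fin n) (Fin n) ℝ := fun r => cfc (fun x : ℝ => x ^ r) P with hA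
  set B : ℝ → Matrix (Fin n) (Fin n) ℝ := fun r => cfc (fun x : ℝ => x ^ r) Q with hB
  have hAh : ∀ r, (A r).IsHermitian := fun r => cfc_predicate _ P
  have hBh : ∀ r, (B r).IsHermitian := fun r => cfc_predicate _ Q
  have hAuu : A u * A u = A (u + u) :=
    cfc_rpow_mul hP hPpos hu0.le hu0.le (ne_of_gt (by linarith))
  have hBuu : B u * B u = B (u + u) :=
    cfc_rpow_mul hQ hQpos hu0.le hu0.le (ne_of_gt (by linarith))
  have hAst : A t * A s = A (t + s) :=
    cfc_rpow_mul hP hPpos ht.le hs (ne_of_gt (by linarith))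
  have hBst : B s * B t = B (s + t) :=
    cfc_rpow_mul hQ hQpos hs ht.le (ne_of_gt (by linarith))
  have e1 : A (u + u) = A t * A s := by
    rw [show u + u = t + s by rw [hu]; ring]; exact hAst.symm
  have e2 : B (u + u) = B s * B t := by
    rw [show u + u = s + t by rw [hu]; ring]; exact hBst.symm
  set X := A u * B u with hX
  have hstar : star X * X = B u * A (u + u) * B u := by
    have h1 : star X = B u * A u := by
      rw [hX, Matrix.star_eq_conjTranspose, Matrix.conjTranspose_mul, (hAh u).eq, (hBh u).eq]
    rw [h1, hX, ← hAuu]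
    noncomm_ring
  have hXX : (‖X‖₊ * ‖X‖₊ : ℝ≥0∞) = (‖B u * A (u + u) * B u‖₊ : ℝ≥0∞) := by
    rw [← hstar]
    exact_mod_cast (CStarRing.nnnorm_star_mul_self (x := X)).symm
  have hH : (B u * A (u + u) * B u).IsHermitian := by
    have := Matrix.isHermitian_mul_mul_conjTranspose (B u) (hAh (u + u))
    rwa [(hBh u).eq] at this
  have hr1 : spectralRadius ℝ (B u * A (u + u) * B u)
      = spectralRadius ℝ ((A s * B s) * (B t * A t)) := by
    calc spectralRadius ℝ (B u * A (u + u) * B u)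
        = spectralRadius ℝ (B u * (A (u + u) * B u)) := by rw [mul_assoc]
      _ = spectralRadius ℝ ((A (u + u) * B u) * B u) := radius_swap _ _
      _ = spectralRadius ℝ (A (u + u) * B (u + u)) := by rw [mul_assoc, hBuu]
      _ = spectralRadius ℝ (A t * ((A s * B s) * B t)) := by
          rw [e1, e2]; congr 1; noncomm_ring
      _ = spectralRadius ℝ (((A s * B s) * B t) * A t) := radius_swap _ _
      _ = spectralRadius ℝ ((A s * B s) * (B t * A t)) := by rw [mul_assoc]
  have main : (‖X‖₊ * ‖X‖₊ : ℝ≥0∞) ≤ (‖A s * B s‖₊ : ℝ≥0∞) * (‖B t * A t‖₊ : ℝ≥0∞) := by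
    rw [hXX]
    calc (‖B u * A (u + u) * B u‖₊ : ℝ≥0∞) ≤ spectralRadius ℝ (B u * A (u + u) * B u) :=
          nnnorm_le_radius hH
      _ = spectralRadius ℝ ((A s * B s) * (B t * A t)) := hr1
      _ ≤ (‖(A s * B s) * (B t * A t)‖₊ : ℝ≥0∞) := spectrum.spectralRadius_le_nnnorm _
      _ ≤ (‖A s * B s‖₊ : ℝ≥0∞) * ‖B t * A t‖₊ := by
          rw [← ENNReal.coe_mul]; exact_mod_cast nnnorm_mul_le _ _
  have mainR : ‖X‖ * ‖X‖ ≤ ‖A s * B s‖ * ‖B t * A t‖ := by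
    rw [← ENNReal.coe_mul, ← ENNReal.coe_mul, ENNReal.coe_le_coe] at main
    exact_mod_cast main
  have hBA : ‖B t * A t‖ = ‖A t * B t‖ := by
    rw [← Matrix.l2_opNorm_conjTranspose (A t * B t), Matrix.conjTranspose_mul,
      (hAh t).eq, (hBh t).eq]
  rw [hBA] at mainR
  have hcu : (0:ℝ) ≤ c ^ u := Real.rpow_nonneg hc u
  have hcs : (0:ℝ) ≤ c ^ s := Real.rpow_nonneg hc s
  have hstep : ‖A s * B s‖ * ‖A t * B t‖ ≤ c ^ s * c ^ t :=
    mul_le_mul Hs Ht (norm_nonneg _) hcs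
  have hexp : c ^ s * c ^ t = c ^ u * c ^ u := by
    rw [← Real.rpow_add' hc (ne_of_gt (by linarith)),
      ← Real.rpow_add' hc (ne_of_gt (by rw [hu]; linarith))]
    rw [hu]; ring_nf
  have hfin : ‖X‖ * ‖X‖ ≤ c ^ u * c ^ u := by
    calc ‖X‖ * ‖X‖ ≤ ‖A s * B s‖ * ‖A t * B t‖ := mainR
      _ ≤ c ^ s * c ^ t := hstep
      _ = c ^ u * c ^ u := hexp
  nlinarith [norm_nonneg X]

lemma norm_unitary_conj_le {n : ℕ} (U M : Matrix (Fin n) (Fin n) ℝ)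
    (hU : star U * U = 1) (hU' : U * star U = 1) : ‖U * M * star U‖ ≤ ‖M‖ := by
  have h1 : ‖U‖ ≤ 1 := norm_unitary_le U hU
  have h2 : ‖star U‖ ≤ 1 := norm_unitary_le (star U) (by rwa [star_star])
  calc ‖U * M * star U‖ ≤ ‖U * M‖ * ‖star U‖ := norm_mul_le _ _
    _ ≤ ‖U‖ * ‖M‖ * ‖star U‖ :=
        mul_le_mul_of_nonneg_right (norm_mul_le _ _) (norm_nonneg _)
    _ ≤ 1 * ‖M‖ * 1 := by
        have h3 : ‖U‖ * ‖M‖ ≤ 1 * ‖M‖ :=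
          mul_le_mul_of_nonneg_right h1 (norm_nonneg _)
        exact mul_le_mul h3 h2 (norm_nonneg _) (by simp [norm_nonneg])
    _ = ‖M‖ := by ring

lemma norm_cfc_sub_le {n : ℕ} {P : Matrix (Fin n) (Fin n) ℝ} (hP : P.IsHermitian)
    (f g : ℝ → ℝ) :
    ‖cfc f P - cfc g P‖ ≤ ∑ i, |f (hP.eigenvalues i) - g (hP.eigenvalues i)| := by
  rw [hP.cfc_eq f, hP.cfc_eq g]
  set U : Matrix (Fin n) (Fin n) ℝ := (hP.eigenvectorUnitary : Matrix (Fin n) (Fin n) ℝ)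
  have hU : star U * U = 1 := Matrix.mem_unitaryGroup_iff'.mp hP.eigenvectorUnitary.2
  have hU' : U * star U = 1 := Matrix.mem_unitaryGroup_iff.mp hP.eigenvectorUnitary.2
  have hsub : hP.cfc f - hP.cfc g
      = U * Matrix.diagonal (fun i => f (hP.eigenvalues i) - g (hP.eigenvalues i)) * star U := by
    unfold Matrix.IsHermitian.cfc
    rw [RCLike.ofReal_real_eq_id]
    simp only [Function.comp_def, id_eq]
    rw [← Matrix.diagonal_sub, mul_sub, sub_mul]
    simp only [Unitary.conjStarAlgAut_apply, Unitary.coe_star, U]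
  rw [hsub]
  refine (norm_unitary_conj_le U _ hU hU').trans ?_
  refine norm_diagonal_le _ _ (Finset.sum_nonneg fun i _ => abs_nonneg _) fun j => ?_
  exact Finset.single_le_sum (f := fun i => |f (hP.eigenvalues i) - g (hP.eigenvalues i)|)
    (fun i _ => abs_nonneg _) (Finset.mem_univ j)

lemma dyadic_bound {n : ℕ} [NeZero n] {P Q : Matrix (Fin n) (Fin n) ℝ}
    (hP : P.IsHermitian) (hQ : Q.IsHermitian) (hPpos : P.PosSemidef) (hQpos : Q.PosSemidef)
    {c : ℝ} (hc : 0 ≤ c) (hbase : ‖P * Q‖ ≤ c) :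
    ∀ m k : ℕ, k ≤ 2 ^ m →
      ‖cfc (fun x : ℝ => x ^ ((k : ℝ) / 2 ^ m)) P * cfc (fun x : ℝ => x ^ ((k : ℝ) / 2 ^ m)) Q‖
        ≤ c ^ ((k : ℝ) / 2 ^ m) := by
  haveI : NormOneClass (Matrix (Fin n) (Fin n) ℝ) := ⟨CStarRing.norm_one⟩
  have eP0 : cfc (fun x : ℝ => x ^ (0:ℝ)) P = 1 := by
    have h1 : (fun x : ℝ => x ^ (0:ℝ)) = fun _ => (1:ℝ) := funext fun x => Real.rpow_zero x
    rw [h1]; exact cfc_const_one ℝ P hP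
  have eQ0 : cfc (fun x : ℝ => x ^ (0:ℝ)) Q = 1 := by
    have h1 : (fun x : ℝ => x ^ (0:ℝ)) = fun _ => (1:ℝ) := funext fun x => Real.rpow_zero x
    rw [h1]; exact cfc_const_one ℝ Q hQ
  have eP1 : cfc (fun x : ℝ => x ^ (1:ℝ)) P = P := by
    have h1 : (fun x : ℝ => x ^ (1:ℝ)) = id := funext fun x => Real.rpow_one x
    rw [h1]; exact cfc_id ℝ P hP
  have eQ1 : cfc (fun x : ℝ => x ^ (1:ℝ)) Q = Q := by
    have h1 : (fun x : ℝ => x ^ (1:ℝ)) = id := funext fun x => Real.rpow_one x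
    rw [h1]; exact cfc_id ℝ Q hQ
  have G0 : ‖cfc (fun x : ℝ => x ^ (0:ℝ)) P * cfc (fun x : ℝ => x ^ (0:ℝ)) Q‖ ≤ c ^ (0:ℝ) := by
    rw [eP0, eQ0, mul_one, norm_one, Real.rpow_zero]
  have G1 : ‖cfc (fun x : ℝ => x ^ (1:ℝ)) P * cfc (fun x : ℝ => x ^ (1:ℝ)) Q‖ ≤ c ^ (1:ℝ) := by
    rw [eP1, eQ1, Real.rpow_one]
    exact hbase
  intro m
  induction m with
  | zero =>
    intro k hk
    interval_cases k
    · simpa using G0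
    · simpa using G1
  | succ m IH =>
    intro k hk
    rcases Nat.even_or_odd k with ⟨j, hj⟩ | ⟨j, hj⟩
    · subst hj
      have hj2 : j ≤ 2 ^ m := by
        have : 2 ^ (m + 1) = 2 * 2 ^ m := by ring
        omega
      have hexp : ((j + j : ℕ) : ℝ) / 2 ^ (m + 1) = (j : ℝ) / 2 ^ m := by
        push_cast
        rw [pow_succ]
        field_simp
        ring
      rw [hexp]
      exact IH j hj2
    · subst hj
      have hj2 : j + 1 ≤ 2 ^ m := by
        have : 2 ^ (m + 1) = 2 * 2 ^ m := by ring
        omega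
      have hs0 : (0:ℝ) ≤ (j : ℝ) / 2 ^ m := by positivity
      have ht0 : (0:ℝ) < ((j + 1 : ℕ) : ℝ) / 2 ^ m := by positivity
      have key := midpoint_step hP hQ hPpos hQpos hc hs0 ht0
        (IH j (le_trans (Nat.le_succ j) hj2)) (IH (j + 1) hj2)
      have hexp : ((2 * j + 1 : ℕ) : ℝ) / 2 ^ (m + 1)
          = ((j : ℝ) / 2 ^ m + ((j + 1 : ℕ) : ℝ) / 2 ^ m) / 2 := by
        push_cast
        rw [pow_succ]
        field_simp
        ring
      rw [hexp]
      exact key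

open Filter
/-- Cordes inequality for matrices: if `P, Q` are symmetric positive
semidefinite real `n × n` matrices and `0 < s ≤ 1`, then
`‖P^s Q^s‖ ≤ ‖PQ‖^s`, where `‖·‖` is the operator (spectral) norm and
fractional powers are defined by spectral calculus (`cfc`). -/
theorem stmt_12 (n : ℕ) (P Q : Matrix (Fin n) (Fin n) ℝ)
    (hP : P.IsHermitian) (hQ : Q.IsHermitian)
    (hPpos : P.PosSemidef) (hQpos : Q.PosSemidef)
    (s : ℝ) (hs0 : 0 < s) (hs1 : s ≤ 1) :
    ‖cfc (fun x : ℝ => x ^ s) P * cfc (fun x : ℝ => x ^ s) Q‖ ≤ ‖P * Q‖ ^ s := by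
  rcases Nat.eq_zero_or_pos n with rfl | hn
  · have hX : cfc (fun x : ℝ => x ^ s) P * cfc (fun x : ℝ => x ^ s) Q = 0 := by
      ext i j; exact i.elim0
    have hPQ : P * Q = 0 := by ext i j; exact i.elim0
    rw [hX, hPQ, norm_zero, Real.zero_rpow hs0.ne']
  haveI : NeZero n := ⟨hn.ne'⟩
  set c : ℝ := ‖P * Q‖ with hc
  have hc0 : 0 ≤ c := norm_nonneg _
  set A : ℝ → Matrix (Fin n) (Fin n) ℝ := fun r => cfc (fun x : ℝ => x ^ r) P with hA
  set B : ℝ → Matrix (Fin n) (Fin n) ℝ := fun r => cfc (fun x : ℝ => x ^ r) Q with hB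
  set a : ℕ → ℝ := fun m => ((⌊s * 2 ^ m⌋₊ : ℕ) : ℝ) / 2 ^ m with ha
  have h2pos : ∀ m : ℕ, (0:ℝ) < 2 ^ m := fun m => by positivity
  have ha_le_s : ∀ m, a m ≤ s := by
    intro m
    rw [ha]
    rw [div_le_iff₀ (h2pos m)]
    exact Nat.floor_le (by positivity)
  have ha_lb : ∀ m, s - 1 / 2 ^ m ≤ a m := by
    intro m
    have h1 : s * 2 ^ m < (⌊s * 2 ^ m⌋₊ : ℝ) + 1 := Nat.lt_floor_add_one _
    have h3 : s - 1 / 2 ^ m < a m := by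
      rw [ha, lt_div_iff₀ (h2pos m), sub_mul, one_div, inv_mul_cancel₀ (h2pos m).ne']
      linarith
    exact h3.le
  have ha_tendsto : Tendsto a atTop (nhds s) := by
    have t0 : Tendsto (fun m : ℕ => ((1:ℝ)/2) ^ m) atTop (nhds 0) :=
      tendsto_pow_atTop_nhds_zero_of_lt_one (by norm_num) (by norm_num)
    have t1 : Tendsto (fun m : ℕ => (1:ℝ) / 2 ^ m) atTop (nhds 0) := by
      simpa [div_pow] using t0
    have t2 : Tendsto (fun m : ℕ => s - 1 / 2 ^ m) atTop (nhds s) := by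
      simpa using tendsto_const_nhds.sub t1
    exact tendsto_of_tendsto_of_tendsto_of_le_of_le t2 tendsto_const_nhds ha_lb ha_le_s
  -- dyadic bound along the sequence
  have hFa : ∀ m, ‖A (a m) * B (a m)‖ ≤ c ^ a m := by
    intro m
    have hfl : ⌊s * 2 ^ m⌋₊ ≤ 2 ^ m := by
      have hle : s * 2 ^ m ≤ ((2 ^ m : ℕ) : ℝ) := by
        push_cast
        nlinarith [h2pos m]
      have := Nat.floor_le_floor hle
      rwa [Nat.floor_natCast] at this
    exact dyadic_bound hP hQ hPpos hQpos hc0 le_rfl m _ hfl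
  -- convergence of the RHS
  have hct : Tendsto (fun m => c ^ a m) atTop (nhds (c ^ s)) := by
    have hcont : ContinuousAt (fun p : ℝ × ℝ => p.1 ^ p.2) (c, s) :=
      Real.continuousAt_rpow (c, s) (Or.inr hs0)
    have := hcont.tendsto.comp (tendsto_const_nhds.prodMk_nhds ha_tendsto)
    simpa [Function.comp_def] using this
  -- convergence of the LHS
  have hrp : ∀ (v : ℝ), 0 ≤ v → Tendsto (fun m => v ^ a m) atTop (nhds (v ^ s)) := by
    intro v _
    have hcont : ContinuousAt (fun p : ℝ × ℝ => p.1 ^ p.2) (v, s) :=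
      Real.continuousAt_rpow (v, s) (Or.inr hs0)
    have := hcont.tendsto.comp (tendsto_const_nhds.prodMk_nhds ha_tendsto)
    simpa [Function.comp_def] using this
  set EP : ℕ → ℝ := fun m => ∑ i, |hP.eigenvalues i ^ a m - hP.eigenvalues i ^ s| with hEPd
  set EQ : ℕ → ℝ := fun m => ∑ i, |hQ.eigenvalues i ^ a m - hQ.eigenvalues i ^ s| with hEQd
  have hEP : Tendsto EP atTop (nhds 0) := by
    rw [hEPd]
    have h0 : (0:ℝ) = ∑ _i : Fin n, (0:ℝ) := by simp
    rw [h0]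
    refine tendsto_finset_sum _ fun i _ => ?_
    have := ((hrp (hP.eigenvalues i) (hPpos.eigenvalues_nonneg i)).sub
      (tendsto_const_nhds (x := hP.eigenvalues i ^ s))).abs
    simpa using this
  have hEQ : Tendsto EQ atTop (nhds 0) := by
    rw [hEQd]
    have h0 : (0:ℝ) = ∑ _i : Fin n, (0:ℝ) := by simp
    rw [h0]
    refine tendsto_finset_sum _ fun i _ => ?_
    have := ((hrp (hQ.eigenvalues i) (hQpos.eigenvalues_nonneg i)).sub
      (tendsto_const_nhds (x := hQ.eigenvalues i ^ s))).abs
    simpa using this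
  have hEPnn : ∀ m, 0 ≤ EP m := fun m => Finset.sum_nonneg fun i _ => abs_nonneg _
  have hEQnn : ∀ m, 0 ≤ EQ m := fun m => Finset.sum_nonneg fun i _ => abs_nonneg _
  have hPdiff : ∀ m, ‖A (a m) - A s‖ ≤ EP m := fun m => norm_cfc_sub_le hP _ _
  have hQdiff : ∀ m, ‖B (a m) - B s‖ ≤ EQ m := fun m => norm_cfc_sub_le hQ _ _
  have hbound : ∀ m, |‖A (a m) * B (a m)‖ - ‖A s * B s‖|
      ≤ (EP m + ‖A s‖) * EQ m + EP m * ‖B s‖ := by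
    intro m
    have h1 : |‖A (a m) * B (a m)‖ - ‖A s * B s‖| ≤ ‖A (a m) * B (a m) - A s * B s‖ :=
      abs_norm_sub_norm_le _ _
    have h2 : A (a m) * B (a m) - A s * B s
        = A (a m) * (B (a m) - B s) + (A (a m) - A s) * B s := by noncomm_ring
    have h3 : ‖A (a m) * B (a m) - A s * B s‖
        ≤ ‖A (a m)‖ * ‖B (a m) - B s‖ + ‖A (a m) - A s‖ * ‖B s‖ := by
      rw [h2]
      exact (norm_add_le _ _).trans (add_le_add (norm_mul_le _ _) (norm_mul_le _ _))
    have h4 : ‖A (a m)‖ ≤ EP m + ‖A s‖ := by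
      have := norm_sub_norm_le (A (a m)) (A s)
      linarith [hPdiff m]
    have h5 : ‖A (a m)‖ * ‖B (a m) - B s‖ ≤ (EP m + ‖A s‖) * EQ m :=
      mul_le_mul h4 (hQdiff m) (norm_nonneg _) (by positivity)
    have h6 : ‖A (a m) - A s‖ * ‖B s‖ ≤ EP m * ‖B s‖ :=
      mul_le_mul_of_nonneg_right (hPdiff m) (norm_nonneg _)
    linarith
  have hD : Tendsto (fun m => (EP m + ‖A s‖) * EQ m + EP m * ‖B s‖) atTop (nhds 0) := by
    have := ((hEP.add_const ‖A s‖).mul hEQ).add (hEP.mul_const ‖B s‖)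
    simpa using this
  have hFt : Tendsto (fun m => ‖A (a m) * B (a m)‖) atTop (nhds ‖A s * B s‖) := by
    rw [← tendsto_sub_nhds_zero_iff]
    refine squeeze_zero_norm (fun m => ?_) hD
    rw [Real.norm_eq_abs]
    exact hbound m
  exact le_of_tendsto_of_tendsto' hFt hct hFa
end
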